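/- arXiv:1707.07797 — 5 statements merged into one kernel-verified Lean document; each statement's English description precedes it below -/
import Mathlib

section
/- Under the stated assumptions on Λ and f, and assuming the threshold x* is finite (or −∞), for every fixed x ∈ ℝ the function g(z) := f(z)·exp(−∫_x^z Λ(y) dy), defined for z ≥ x, is nondecreasing on the interval [x, max(x, x*)] and strictly decreasing on the interval [max(x, x*), ∞) (where max(x, −∞) := x). In particular g attains its maximum over [x,∞) at the point max(x, x*). -/
/-!
With `F z = ∫_x^z Λ`, the function `g = f · exp (-F)` is locally absolutely continuous with
`g' = (f' - f Λ) exp (-F) = -Λ (f - f' / Λ) exp (-F)` almost everywhere. Hence `g` increases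
where `f - f' / Λ ≤ 0`, i.e. on `(x, max x x*]`, and strictly decreases where `f - f' / Λ > 0`,
i.e. beyond `max x x*`.
-/

open MeasureTheory Filter Set

theorem LipschitzOnWith.comp_absolutelyContinuousOnInterval {X Y : Type*} [PseudoMetricSpace X]
    [PseudoMetricSpace Y] {g : X → Y} {K : NNReal} {s : Set X} (hg : LipschitzOnWith K g s)
    {f : ℝ → X} {a b : ℝ} (hf : AbsolutelyContinuousOnInterval f a b)
    (hfs : MapsTo f (uIcc a b) s) : AbsolutelyContinuousOnInterval (g ∘ f) a b := by
  unfold AbsolutelyContinuousOnInterval at hf ⊢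
  refine squeeze_zero' (Eventually.of_forall fun E => Finset.sum_nonneg fun _ _ => dist_nonneg)
    ?_ (by simpa using hf.const_mul (K : ℝ))
  filter_upwards [mem_inf_of_right (mem_principal_self _)] with E hE
  rw [Finset.mul_sum]
  gcongr with i hi
  exact hg.dist_le_mul _ (hfs (hE.1 i hi).1) _ (hfs (hE.1 i hi).2)

theorem AbsolutelyContinuousOnInterval.rexp {f : ℝ → ℝ} {a b : ℝ}
    (hf : AbsolutelyContinuousOnInterval f a b) :
    AbsolutelyContinuousOnInterval (fun z => Real.exp (f z)) a b := by
  obtain ⟨C, hC⟩ := hf.exists_bound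
  obtain ⟨K, hK⟩ := ContDiffOn.exists_lipschitzOnWith (s := Icc (-C) C)
    (Real.contDiff_exp (n := 1)).contDiffOn one_ne_zero (convex_Icc _ _) isCompact_Icc
  exact hK.comp_absolutelyContinuousOnInterval hf fun z hz => abs_le.1 (hC z hz)

section IntegralRepresentation

variable {f f' : ℝ → ℝ} (hf' : ∀ a b, IntervalIntegrable f' volume a b)
  (hf : ∀ a b, f b - f a = ∫ y in a..b, f' y)

include hf in
theorem eq_add_integral_of_sub_eq_integral (a : ℝ) : f = fun z => f a + ∫ y in a..z, f' y := by
  funext z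
  linarith [hf a z]

include hf' hf

theorem continuous_of_sub_eq_integral : Continuous f := by
  rw [eq_add_integral_of_sub_eq_integral hf 0]
  exact continuous_const.add (intervalIntegral.continuous_primitive hf' 0)

theorem absolutelyContinuousOnInterval_of_sub_eq_integral (a b : ℝ) :
    AbsolutelyContinuousOnInterval f a b := by
  rw [eq_add_integral_of_sub_eq_integral hf a]
  exact (contDiffOn_const (c := f a)).absolutelyContinuousOnInterval.fun_add
    ((hf' a b).absolutelyContinuousOnInterval_intervalIntegral left_mem_uIcc)

theorem ae_hasDerivAt_of_sub_eq_integral : ∀ᵐ z, HasDerivAt f (f' z) z := by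
  have hloc : LocallyIntegrable f' volume := fun z =>
    ⟨Icc (z - 1) (z + 1), Icc_mem_nhds (by linarith) (by linarith),
      (intervalIntegrable_iff_integrableOn_Icc_of_le (by linarith)).1 (hf' _ _)⟩
  filter_upwards [LocallyIntegrable.ae_hasDerivAt_integral hloc] with z hz
  rw [eq_add_integral_of_sub_eq_integral hf 0]
  exact (hz 0).const_add _

end IntegralRepresentation

section ExpWeight

variable {f f' F Λ : ℝ → ℝ}
  (hf' : ∀ a b, IntervalIntegrable f' volume a b) (hf : ∀ a b, f b - f a = ∫ y in a..b, f' y)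
  (hΛ : ∀ a b, IntervalIntegrable Λ volume a b) (hF : ∀ a b, F b - F a = ∫ y in a..b, Λ y)
include hf' hf hΛ hF

theorem mul_exp_neg_sub_eq_integral (a b : ℝ) :
    f b * Real.exp (-F b) - f a * Real.exp (-F a)
      = ∫ z in a..b, (f' z - f z * Λ z) * Real.exp (-F z) := by
  have hac : AbsolutelyContinuousOnInterval (fun z => f z * Real.exp (-F z)) a b :=
    (absolutelyContinuousOnInterval_of_sub_eq_integral hf' hf a b).fun_mul
      (absolutelyContinuousOnInterval_of_sub_eq_integral hΛ hF a b).fun_neg.rexp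
  rw [← hac.integral_deriv_eq_sub]
  refine intervalIntegral.integral_congr_ae ?_
  filter_upwards [ae_hasDerivAt_of_sub_eq_integral hf' hf,
    ae_hasDerivAt_of_sub_eq_integral hΛ hF] with z hfz hFz _
  have hg : HasDerivAt (fun z => f z * Real.exp (-F z))
      (f' z * Real.exp (-F z) + f z * (Real.exp (-F z) * -Λ z)) z :=
    hfz.mul hFz.neg.exp
  rw [hg.deriv]
  ring

theorem intervalIntegrable_sub_mul_mul_exp_neg (a b : ℝ) :
    IntervalIntegrable (fun z => (f' z - f z * Λ z) * Real.exp (-F z)) volume a b :=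
  ((hf' a b).sub ((hΛ a b).continuousOn_mul
    (continuous_of_sub_eq_integral hf' hf).continuousOn)).mul_continuousOn
    (continuous_of_sub_eq_integral hΛ hF).neg.rexp.continuousOn

end ExpWeight

theorem monotoneOn_of_sub_eq_integral {g φ : ℝ → ℝ} {s : Set ℝ} (hs : s.OrdConnected)
    (hg : ∀ a b, g b - g a = ∫ z in a..b, φ z) (hφ : ∀ᵐ z, z ∈ s → 0 ≤ φ z) :
    MonotoneOn g s := by
  intro a ha b hb hab
  have hint : 0 ≤ ∫ z in a..b, φ z :=
    intervalIntegral.integral_nonneg_of_ae_restrict hab <| (ae_restrict_iff' measurableSet_Icc).2 <|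
      hφ.mono fun z hz hzab => hz (hs.out ha hb hzab)
  linarith [hg a b]

theorem intervalIntegral_pos_of_ae_pos {φ : ℝ → ℝ} {a b : ℝ} (hab : a < b)
    (hφi : IntervalIntegrable φ volume a b) (hφ : ∀ᵐ z, z ∈ Ioc a b → 0 < φ z) :
    0 < ∫ z in a..b, φ z := by
  have hnonneg : 0 ≤ᵐ[volume.restrict (uIoc a b)] φ := by
    rw [uIoc_of_le hab.le, EventuallyLE, ae_restrict_iff' measurableSet_Ioc]
    exact hφ.mono fun z hz hzab => (hz hzab).le
  rw [intervalIntegral.integral_pos_iff_support_of_nonneg_ae' hnonneg hφi]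
  refine ⟨hab, ((Measure.measure_Ioo_pos _).2 hab).trans_le (measure_mono_ae ?_)⟩
  exact hφ.mono fun z hz hzab => ⟨(hz (Ioo_subset_Ioc_self hzab)).ne', Ioo_subset_Ioc_self hzab⟩

theorem strictAntiOn_of_sub_eq_integral {g φ : ℝ → ℝ} {s : Set ℝ} (hs : s.OrdConnected)
    (hg : ∀ a b, g b - g a = ∫ z in a..b, φ z) (hφi : ∀ a b, IntervalIntegrable φ volume a b)
    (hφ : ∀ᵐ z, z ∈ s → φ z < 0) : StrictAntiOn g s := by
  intro a ha b hb hab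
  have hint : 0 < ∫ z in a..b, -φ z :=
    intervalIntegral_pos_of_ae_pos hab (hφi a b).neg <|
      hφ.mono fun z hz hzab => neg_pos.2 (hz (hs.out ha hb (Ioc_subset_Icc_self hzab)))
  rw [intervalIntegral.integral_neg] at hint
  linarith [hg a b]

theorem sub_mul_nonneg_iff_sub_div_nonpos {v d l : ℝ} (hl : 0 < l) :
    0 ≤ d - v * l ↔ v - d / l ≤ 0 := by
  rw [sub_nonneg, sub_nonpos, le_div_iff₀ hl]

theorem sub_mul_neg_iff_sub_div_pos {v d l : ℝ} (hl : 0 < l) :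
    d - v * l < 0 ↔ 0 < v - d / l := by
  rw [sub_neg, sub_pos, div_lt_iff₀ hl]

theorem monotonicity_of_upcrossing_value_general (Λ f f' : ℝ → ℝ) (xs : EReal)
    (hΛpos : ∀ y, 0 < Λ y)
    (hΛloc : ∀ a b : ℝ, IntervalIntegrable Λ volume a b)
    (hf'int : ∀ a b : ℝ, IntervalIntegrable f' volume a b)
    (hFTC : ∀ a b : ℝ, f b - f a = ∫ y in a..b, f' y)
    (hpos : ∀ᵐ (z : ℝ) ∂(volume : Measure ℝ), xs < (z : EReal) → 0 < f z - f' z / Λ z)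
    (hneg : ∀ᵐ (z : ℝ) ∂(volume : Measure ℝ), (z : EReal) ≤ xs → f z - f' z / Λ z ≤ 0)
    (x m : ℝ) (hm : (m : EReal) = max (x : EReal) xs) :
    MonotoneOn (fun z => f z * Real.exp (-∫ y in x..z, Λ y)) (Set.Icc x m) ∧
    StrictAntiOn (fun z => f z * Real.exp (-∫ y in x..z, Λ y)) (Set.Ici m) ∧
    ∀ z : ℝ, x ≤ z →
      f z * Real.exp (-∫ y in x..z, Λ y) ≤ f m * Real.exp (-∫ y in x..m, Λ y) := by
  set F := fun z => ∫ y in x..z, Λ y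
  have hF : ∀ a b, F b - F a = ∫ y in a..b, Λ y := fun a b =>
    intervalIntegral.integral_interval_sub_left (hΛloc x b) (hΛloc x a)
  have hg := mul_exp_neg_sub_eq_integral hf'int hFTC hΛloc hF
  have hxm : x ≤ m := by exact_mod_cast hm ▸ le_max_left (x : EReal) xs
  have hup : MonotoneOn (fun z => f z * Real.exp (-F z)) (Icc x m) := by
    refine monotoneOn_of_sub_eq_integral ordConnected_Icc hg ?_
    filter_upwards [hneg, Measure.ae_ne volume x] with z hz hzx hzI
    have hzxs : (z : EReal) ≤ xs := (le_max_iff.1 (hm ▸ EReal.coe_le_coe_iff.2 hzI.2)).resolve_left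
      (EReal.coe_lt_coe_iff.2 (hzI.1.lt_of_ne' hzx)).not_ge
    exact mul_nonneg ((sub_mul_nonneg_iff_sub_div_nonpos (hΛpos z)).2 (hz hzxs)) (Real.exp_pos _).le
  have hdown : StrictAntiOn (fun z => f z * Real.exp (-F z)) (Ici m) := by
    refine strictAntiOn_of_sub_eq_integral ordConnected_Ici hg
      (intervalIntegrable_sub_mul_mul_exp_neg hf'int hFTC hΛloc hF) ?_
    filter_upwards [hpos, Measure.ae_ne volume m] with z hz hzm hzI
    have hxsz : xs < (z : EReal) :=
      (le_max_right (x : EReal) xs).trans_lt (hm ▸ EReal.coe_lt_coe_iff.2 (hzI.lt_of_ne' hzm))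
    exact mul_neg_of_neg_of_pos ((sub_mul_neg_iff_sub_div_pos (hΛpos z)).2 (hz hxsz))
      (Real.exp_pos _)
  refine ⟨hup, hdown, fun z hz => ?_⟩
  rcases le_or_gt z m with hzm | hmz
  · exact hup ⟨hz, hzm⟩ ⟨hxm, le_rfl⟩ hzm
  · exact (hdown self_mem_Ici hmz.le hmz).le

/-- Under Assumptions 2.2 and 2.3 of the paper (with the threshold `x*` finite or `-∞`),
for every fixed `x` the function `g z = f z * exp (-∫_x^z Λ)` is nondecreasing on
`[x, max (x, x*)]` and strictly decreasing on `[max (x, x*), ∞)`; in particular it is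
maximized over `[x, ∞)` at `max (x, x*)`. -/
theorem monotonicity_of_upcrossing_value (Λ f f' : ℝ → ℝ) (xs : EReal)
    (hΛmeas : Measurable Λ) (hΛpos : ∀ y, 0 < Λ y)
    (hΛloc : ∀ a b : ℝ, IntervalIntegrable Λ volume a b)
    (hΛinf : ∀ x : ℝ, (∫⁻ y in Set.Ioi x, ENNReal.ofReal (Λ y)) = ⊤)
    (hf'int : ∀ a b : ℝ, IntervalIntegrable f' volume a b)
    (hFTC : ∀ a b : ℝ, f b - f a = ∫ y in a..b, f' y)
    (hpos : ∀ᵐ (z : ℝ) ∂(volume : Measure ℝ), xs < (z : EReal) → 0 < f z - f' z / Λ z)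
    (hneg : ∀ᵐ (z : ℝ) ∂(volume : Measure ℝ), (z : EReal) ≤ xs → f z - f' z / Λ z ≤ 0)
    (hmono : ∃ htil : ℝ → ℝ, Monotone htil ∧
      ∀ᵐ (z : ℝ) ∂(volume : Measure ℝ), xs < (z : EReal) → f z - f' z / Λ z = htil z)
    (hfpos : ∀ᶠ z in atTop, 0 < f z)
    (hxs : xs ≠ ⊤)
    (x m : ℝ) (hm : (m : EReal) = max (x : EReal) xs) :
    MonotoneOn (fun z => f z * Real.exp (-∫ y in x..z, Λ y)) (Set.Icc x m) ∧
    StrictAntiOn (fun z => f z * Real.exp (-∫ y in x..z, Λ y)) (Set.Ici m) ∧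
    ∀ z : ℝ, x ≤ z →
      f z * Real.exp (-∫ y in x..z, Λ y) ≤ f m * Real.exp (-∫ y in x..m, Λ y) :=
  monotonicity_of_upcrossing_value_general Λ f f' xs hΛpos hΛloc hf'int hFTC hpos hneg x m hm
end

section
/- Let f : ℝ → ℝ be positive and nondecreasing, with log∘f concave on ℝ, and let c > 0. If x ≤ y and the left derivative of f at x satisfies f'_−(x) ≤ c·f(x), then f'_−(y) − f'_−(x) ≤ c·(f(y) − f(x)); equivalently, f(y) − f'_−(y)/c ≥ f(x) − f'_−(x)/c. -/
/-!
The left derivative of the concave function `log ∘ f` is `f'/f`, so `f'/f` is antitone. For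
`x ≤ y` this gives `f' y ≤ f y * (f' x / f x) = f' x + (f y - f x) * (f' x / f x)`, and the last
factor is at most `c` while `f y - f x ≥ 0` by monotonicity.
-/

open Set

lemma ConcaveOn.antitoneOn_of_hasDerivWithinAt_Iio {S : Set ℝ} {g g' : ℝ → ℝ}
    (hg : ConcaveOn ℝ S g) (hg' : ∀ x ∈ interior S, HasDerivWithinAt g (g' x) (Iio x) x) :
    AntitoneOn g' (interior S) := by
  intro x hx y hy hxy
  have hleft : ∀ z ∈ interior S, derivWithin (-g) (Iio z) z = -g' z := fun z hz =>
    (hg' z hz).neg.derivWithin (uniqueDiffWithinAt_Iio z)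
  simpa only [hleft x hx, hleft y hy, neg_le_neg_iff] using
    hg.neg.monotoneOn_leftDeriv hx hy hxy

lemma sub_le_mul_sub_of_div_le_div {a b a' b' c : ℝ} (ha : 0 < a) (hab : a ≤ b)
    (hdiv : b' / b ≤ a' / a) (ha' : a' ≤ c * a) : b' - a' ≤ c * (b - a) := by
  have hb : 0 < b := ha.trans_le hab
  have hratio : a' / a ≤ c := (div_le_iff₀ ha).2 ha'
  have hb' : b' ≤ a' + (b - a) * (a' / a) := calc
    b' ≤ b * (a' / a) := (div_le_iff₀' hb).1 hdiv
    _ = a' + (b - a) * (a' / a) := by field_simp; ring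
  linarith [mul_le_mul_of_nonneg_left hratio (sub_nonneg.2 hab)]

/-- Key inequality in Corollary 2.1 of the paper: if `f` is positive, nondecreasing and
log-concave, `c > 0`, `f'` is the left derivative of `f`, `x ≤ y` and `f' x ≤ c * f x`,
then `f' y - f' x ≤ c * (f y - f x)`; equivalently
`f y - f' y / c ≥ f x - f' x / c`. -/
theorem log_concave_h_monotone (f f' : ℝ → ℝ) (c : ℝ) (hc : 0 < c)
    (hfpos : ∀ x, 0 < f x) (hfmono : Monotone f)
    (hconc : ConcaveOn ℝ Set.univ (fun x => Real.log (f x)))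
    (hf' : ∀ x : ℝ, HasDerivWithinAt f (f' x) (Set.Iio x) x)
    (x y : ℝ) (hxy : x ≤ y) (hx : f' x ≤ c * f x) :
    f' y - f' x ≤ c * (f y - f x) ∧ f x - f' x / c ≤ f y - f' y / c := by
  have hlogDeriv : AntitoneOn (fun t => f' t / f t) (interior univ) :=
    hconc.antitoneOn_of_hasDerivWithinAt_Iio fun t _ => (hf' t).log (hfpos t).ne'
  rw [interior_univ] at hlogDeriv
  have hmain : f' y - f' x ≤ c * (f y - f x) :=
    sub_le_mul_sub_of_div_le_div (hfpos x) (hfmono hxy)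
      (hlogDeriv (mem_univ x) (mem_univ y) hxy) hx
  refine ⟨hmain, ?_⟩
  have hdiv : (f' y - f' x) / c ≤ f y - f x := (div_le_iff₀ hc).2 (by linarith)
  rw [sub_div] at hdiv
  linarith
end

section
/- Let M be a real-valued random variable on a probability space, let h : ℝ → ℝ be nondecreasing with E[|h(x + M)|] < ∞ for every x ∈ ℝ, and set f(x) := E[h(x + M)]. Fix x₁ ∈ ℝ and suppose f is left-continuous at x₁, i.e. lim_{x↑x₁} f(x) = f(x₁). Then for every nondecreasing sequence (x_n) with x_n ↑ x₁, the sequence h(x_n + M) converges to h(x₁ + M) almost surely. -/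
/-!
The functions `h (x n + M)` increase in `n` and are bounded by `h (x₁ + M)`. Left-continuity
of `f` (which on `Iio x₁` is the same as on `Iic x₁`, so the sequence may reach `x₁`) says
their integrals converge to the integral of this bound; a monotone sequence whose integrals
reach the integral of an upper bound converges to that bound almost everywhere.
-/

open MeasureTheory Filter

theorem Monotone.tendsto_nhdsWithin_Iic {ι α : Type*} [Preorder ι] [IsDirectedOrder ι]
    [TopologicalSpace α] [Preorder α] [OrderClosedTopology α] {u : ι → α} {a : α}
    (hu : Monotone u) (hlim : Tendsto u atTop (nhds a)) :
    Tendsto u atTop (nhdsWithin a (Set.Iic a)) :=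
  tendsto_nhdsWithin_of_tendsto_nhds_of_eventually_within _ hlim
    (Eventually.of_forall fun n => hu.ge_of_tendsto hlim n)

theorem as_convergence_from_left_continuity_general {Ω : Type*} [MeasurableSpace Ω]
    (P : Measure Ω)
    (M : Ω → ℝ)
    (h : ℝ → ℝ) (hmono : Monotone h)
    (hint : ∀ x : ℝ, Integrable (fun ω => h (x + M ω)) P)
    (x₁ : ℝ)
    (hlc : Tendsto (fun x => ∫ ω, h (x + M ω) ∂P) (nhdsWithin x₁ (Set.Iio x₁))
      (nhds (∫ ω, h (x₁ + M ω) ∂P)))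
    (xseq : ℕ → ℝ) (hseq_mono : Monotone xseq)
    (hseq_lim : Tendsto xseq atTop (nhds x₁)) :
    ∀ᵐ ω ∂P, Tendsto (fun n => h (xseq n + M ω)) atTop (nhds (h (x₁ + M ω))) := by
  have hlc_Iic : Tendsto (fun x => ∫ ω, h (x + M ω) ∂P) (nhdsWithin x₁ (Set.Iic x₁))
      (nhds (∫ ω, h (x₁ + M ω) ∂P)) :=
    continuousWithinAt_Iio_iff_Iic.mp hlc
  have hle : ∀ n, xseq n ≤ x₁ := hseq_mono.ge_of_tendsto hseq_lim
  refine tendsto_of_integral_tendsto_of_monotone (fun n => hint (xseq n)) (hint x₁)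
    (hlc_Iic.comp (hseq_mono.tendsto_nhdsWithin_Iic hseq_lim)) ?_ ?_
  · exact Eventually.of_forall fun ω m n hmn => hmono (add_le_add_left (hseq_mono hmn) _)
  · exact Eventually.of_forall fun ω n => hmono (add_le_add_left (hle n) _)

/-- If `h` is nondecreasing with `E|h(x + M)| < ∞` for all `x`, `f x = E[h(x + M)]` is
left-continuous at `x₁`, and `(x n)` is a nondecreasing sequence converging to `x₁`,
then `h (x n + M) → h (x₁ + M)` almost surely. -/
theorem as_convergence_from_left_continuity {Ω : Type*} [MeasurableSpace Ω]
    (P : Measure Ω) [IsProbabilityMeasure P]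
    (M : Ω → ℝ) (hM : Measurable M)
    (h : ℝ → ℝ) (hmono : Monotone h)
    (hint : ∀ x : ℝ, Integrable (fun ω => h (x + M ω)) P)
    (x₁ : ℝ)
    (hlc : Tendsto (fun x => ∫ ω, h (x + M ω) ∂P) (nhdsWithin x₁ (Set.Iio x₁))
      (nhds (∫ ω, h (x₁ + M ω) ∂P)))
    (xseq : ℕ → ℝ) (hseq_mono : Monotone xseq)
    (hseq_lim : Tendsto xseq atTop (nhds x₁)) :
    ∀ᵐ ω ∂P, Tendsto (fun n => h (xseq n + M ω)) atTop (nhds (h (x₁ + M ω))) :=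
  as_convergence_from_left_continuity_general P M h hmono hint x₁ hlc xseq hseq_mono hseq_lim
end

section
/- Let M be a real-valued random variable on a probability space, let h : ℝ → ℝ be nondecreasing, and let x* ∈ ℝ ∪ {−∞} be such that h(x) > 0 if and only if x > x*. Assume E[|h(x + M)|] < ∞ for every x ∈ ℝ and that f(x) := E[h(x + M)] is left-continuous on ℝ. Then the function V(x) := E[h(x + M)·1{x + M > x*}] is nondecreasing and left-continuous (equivalently, nondecreasing and lower semicontinuous) on ℝ. -/
/-!
On the event `{x + M > x*}` the threshold condition makes `h` positive, and off it nonpositive,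
so `V x = E[h⁺(x + M)]`. Hence `V` is nondecreasing, and `V = f + g` with
`g x = E[h⁻(x + M)]` nonincreasing. For `x < x₁` this squeezes `V x` between
`f x + g x₁`, which tends to `V x₁` by left-continuity of `f`, and `V x₁`.
-/

open MeasureTheory Filter Topology

theorem Set.indicator_eq_max_zero_of_pos_iff {α : Type*} {s : Set α} {h : α → ℝ}
    (hs : ∀ y, 0 < h y ↔ y ∈ s) : s.indicator h = fun y => max (h y) 0 := by
  funext y
  by_cases hy : y ∈ s
  · rw [Set.indicator_of_mem hy, max_eq_left ((hs y).2 hy).le]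
  · rw [Set.indicator_of_notMem hy, max_eq_right (not_lt.1 (mt (hs y).1 hy))]

theorem integral_max_zero_sub_integral_max_neg_zero {α : Type*} [MeasurableSpace α]
    {μ : Measure α} {f : α → ℝ} (hf : Integrable f μ) :
    ∫ a, max (f a) 0 ∂μ - ∫ a, max (-f a) 0 ∂μ = ∫ a, f a ∂μ := by
  rw [← integral_sub hf.pos_part hf.neg_part]
  simp only [max_zero_sub_eq_self]

section Translate

variable {Ω : Type*} [MeasurableSpace Ω] {P : Measure Ω} {M : Ω → ℝ} {φ : ℝ → ℝ}

theorem Monotone.integral_comp_add (hφ : Monotone φ)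
    (hint : ∀ x, Integrable (fun ω => φ (x + M ω)) P) :
    Monotone fun x => ∫ ω, φ (x + M ω) ∂P :=
  fun _ _ hab => integral_mono (hint _) (hint _) fun _ => hφ (add_le_add_left hab _)

theorem Antitone.integral_comp_add (hφ : Antitone φ)
    (hint : ∀ x, Integrable (fun ω => φ (x + M ω)) P) :
    Antitone fun x => ∫ ω, φ (x + M ω) ∂P :=
  fun _ _ hab => integral_mono (hint _) (hint _) fun _ => hφ (add_le_add_left hab _)

end Translate

theorem Monotone.tendsto_nhdsLT_of_sub_antitone {α : Type*} [TopologicalSpace α] [Preorder α]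
    {V g : α → ℝ} {a : α} (hV : Monotone V) (hg : Antitone g)
    (hf : Tendsto (fun x => V x - g x) (𝓝[<] a) (𝓝 (V a - g a))) :
    Tendsto V (𝓝[<] a) (𝓝 (V a)) := by
  have hlower : Tendsto (fun x => V x - g x + g a) (𝓝[<] a) (𝓝 (V a)) := by
    simpa using hf.add_const (g a)
  refine tendsto_of_tendsto_of_tendsto_of_le_of_le' hlower tendsto_const_nhds ?_ ?_ <;>
    filter_upwards [self_mem_nhdsWithin] with x hx
  · linarith [hg (le_of_lt hx)]
  · exact hV (le_of_lt hx)

theorem value_function_monotone_lsc_general {Ω : Type*} [MeasurableSpace Ω]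
    (P : Measure Ω)
    (M : Ω → ℝ)
    (h : ℝ → ℝ) (hmono : Monotone h)
    (xs : EReal)
    (hthr : ∀ x : ℝ, 0 < h x ↔ xs < (x : EReal))
    (hint : ∀ x : ℝ, Integrable (fun ω => h (x + M ω)) P)
    (hlc : ∀ x₁ : ℝ, Tendsto (fun x => ∫ ω, h (x + M ω) ∂P)
      (nhdsWithin x₁ (Set.Iio x₁)) (nhds (∫ ω, h (x₁ + M ω) ∂P))) :
    Monotone (fun x : ℝ =>
      ∫ ω, Set.indicator {y : ℝ | xs < (y : EReal)} h (x + M ω) ∂P) ∧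
    ∀ x₁ : ℝ, Tendsto (fun x : ℝ =>
        ∫ ω, Set.indicator {y : ℝ | xs < (y : EReal)} h (x + M ω) ∂P)
      (nhdsWithin x₁ (Set.Iio x₁))
      (nhds (∫ ω, Set.indicator {y : ℝ | xs < (y : EReal)} h (x₁ + M ω) ∂P)) := by
  rw [Set.indicator_eq_max_zero_of_pos_iff (s := {y : ℝ | xs < (y : EReal)}) hthr]
  have hV : Monotone fun x => ∫ ω, max (h (x + M ω)) 0 ∂P :=
    Monotone.integral_comp_add (fun _ _ hab => max_le_max_right 0 (hmono hab))
      fun x => (hint x).pos_part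
  have hg : Antitone fun x => ∫ ω, max (-h (x + M ω)) 0 ∂P :=
    Antitone.integral_comp_add (fun _ _ hab => max_le_max_right 0 (neg_le_neg (hmono hab)))
      fun x => (hint x).neg_part
  refine ⟨hV, fun x₁ => hV.tendsto_nhdsLT_of_sub_antitone hg ?_⟩
  simpa only [integral_max_zero_sub_integral_max_neg_zero (hint _)] using hlc x₁

/-- Lemma A.3 of the paper: let `h` be nondecreasing with threshold `x* ∈ ℝ ∪ {-∞}`
(`h x > 0 ↔ x > x*`), with `E|h(x + M)| < ∞` for all `x`, and suppose
`f x = E[h(x + M)]` is left-continuous on `ℝ`. Then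
`V x = E[h(x + M) · 1{x + M > x*}]` is nondecreasing and left-continuous. -/
theorem value_function_monotone_lsc {Ω : Type*} [MeasurableSpace Ω]
    (P : Measure Ω) [IsProbabilityMeasure P]
    (M : Ω → ℝ) (hM : Measurable M)
    (h : ℝ → ℝ) (hmono : Monotone h)
    (xs : EReal) (hxs : xs ≠ ⊤)
    (hthr : ∀ x : ℝ, 0 < h x ↔ xs < (x : EReal))
    (hint : ∀ x : ℝ, Integrable (fun ω => h (x + M ω)) P)
    (hlc : ∀ x₁ : ℝ, Tendsto (fun x => ∫ ω, h (x + M ω) ∂P)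
      (nhdsWithin x₁ (Set.Iio x₁)) (nhds (∫ ω, h (x₁ + M ω) ∂P))) :
    Monotone (fun x : ℝ =>
      ∫ ω, Set.indicator {y : ℝ | xs < (y : EReal)} h (x + M ω) ∂P) ∧
    ∀ x₁ : ℝ, Tendsto (fun x : ℝ =>
        ∫ ω, Set.indicator {y : ℝ | xs < (y : EReal)} h (x + M ω) ∂P)
      (nhdsWithin x₁ (Set.Iio x₁))
      (nhds (∫ ω, Set.indicator {y : ℝ | xs < (y : EReal)} h (x₁ + M ω) ∂P)) :=
  value_function_monotone_lsc_general P M h hmono xs hthr hint hlc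
end

section
/- Let Y be a real-valued random variable on a probability space, let ρ > 0 and n ≥ 2. Suppose h^{(1)}, ..., h^{(n)} : ℝ → ℝ are nondecreasing functions such that for each l there is a threshold x_l* ∈ ℝ ∪ {−∞} with h^{(l)}(x) > 0 if and only if x > x_l*, that E[|h^{(l)}(x + Y)|] < ∞ for all x and l, and that the recursion h^{(l+1)}(x) = h^{(1)}(x) + ρ·E[h^{(l)}(x + Y)·1{x + Y > x_l*}] holds for all x ∈ ℝ and 1 ≤ l ≤ n − 1. Then for every 1 ≤ l ≤ n − 1: h^{(l+1)}(x) ≥ h^{(l)}(x) for all x ∈ ℝ, and x_{l+1}* ≤ x_l*. In particular the sequence of thresholds (x_l*)_{1 ≤ l ≤ n} is nonincreasing and the sequence of functions (h^{(l)})_{1 ≤ l ≤ n} is pointwise nondecreasing in l. -/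
/-!
A function is positive exactly above its threshold, so the truncated expectation
`E[h⁽ˡ⁾(x + Y) 1{x + Y > x_l*}]` is just `E[(h⁽ˡ⁾)⁺(x + Y)]`. The recursion is therefore monotone in
`h⁽ˡ⁾`, and induction on `l`, started by `h⁽²⁾ = h⁽¹⁾ + ρ E[(h⁽¹⁾)⁺(x + Y)] ≥ h⁽¹⁾`, gives
`h⁽ˡ⁺¹⁾ ≥ h⁽ˡ⁾`. A pointwise larger function is positive wherever the smaller one is, so its
threshold is smaller.
-/

open MeasureTheory

def HasThreshold (f : ℝ → ℝ) (a : EReal) : Prop :=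
  ∀ x : ℝ, 0 < f x ↔ a < (x : EReal)

namespace HasThreshold

variable {f g : ℝ → ℝ} {a b : EReal}

theorem indicator_eq_max_zero (hf : HasThreshold f a) :
    {y : ℝ | a < (y : EReal)}.indicator f = fun y => max (f y) 0 := by
  ext y
  by_cases hy : y ∈ {y : ℝ | a < (y : EReal)}
  · rw [Set.indicator_of_mem hy, max_eq_left ((hf y).mpr hy).le]
  · rw [Set.indicator_of_notMem hy, max_eq_right (not_lt.mp fun hpos => hy ((hf y).mp hpos))]

theorem le_of_forall_le (hf : HasThreshold f a) (hg : HasThreshold g b)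
    (hfg : ∀ x, f x ≤ g x) : b ≤ a := by
  by_contra! hab
  obtain ⟨x, hax, hxb⟩ := EReal.exists_between_coe_real hab
  exact ((hg x).mp (((hf x).mpr hax).trans_le (hfg x))).not_gt hxb

end HasThreshold

theorem thresholds_monotone_general {Ω : Type*} [MeasurableSpace Ω]
    (P : Measure Ω)
    (Y : Ω → ℝ) (ρ : ℝ) (hρ : 0 < ρ)
    (n : ℕ)
    (h : ℕ → ℝ → ℝ) (xs : ℕ → EReal)
    (hthr : ∀ l, 1 ≤ l → l ≤ n → ∀ x : ℝ, 0 < h l x ↔ xs l < (x : EReal))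
    (hint : ∀ l, 1 ≤ l → l ≤ n → ∀ x : ℝ, Integrable (fun ω => h l (x + Y ω)) P)
    (hrec : ∀ l, 1 ≤ l → l + 1 ≤ n → ∀ x : ℝ,
      h (l + 1) x = h 1 x
        + ρ * ∫ ω, Set.indicator {y : ℝ | xs l < (y : EReal)} (h l) (x + Y ω) ∂P) :
    ∀ l, 1 ≤ l → l + 1 ≤ n → (∀ x : ℝ, h l x ≤ h (l + 1) x) ∧ xs (l + 1) ≤ xs l := by
  have hrec_posPart : ∀ l, 1 ≤ l → l + 1 ≤ n → ∀ x : ℝ,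
      h (l + 1) x = h 1 x + ρ * ∫ ω, max (h l (x + Y ω)) 0 ∂P := fun l hl hln x => by
    rw [hrec l hl hln x, HasThreshold.indicator_eq_max_zero (hthr l hl (by omega))]
  intro l hl hln
  have hle : ∀ x, h l x ≤ h (l + 1) x := by
    induction l, hl using Nat.le_induction with
    | base =>
      intro x
      rw [hrec_posPart 1 le_rfl hln x]
      have hpos : 0 ≤ ∫ ω, max (h 1 (x + Y ω)) 0 ∂P := integral_nonneg fun ω => le_max_right _ _
      exact le_add_of_nonneg_right (mul_nonneg hρ.le hpos)
    | succ k hk ih =>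
      intro x
      rw [hrec_posPart k hk (by omega) x, hrec_posPart (k + 1) (by omega) hln x]
      gcongr h 1 x + ρ * ?_
      refine integral_mono_of_nonneg (.of_forall fun ω => le_max_right _ _)
        (hint (k + 1) (by omega) (by omega) x).pos_part (.of_forall fun ω => ?_)
      exact max_le_max_right 0 (ih (by omega) (x + Y ω))
  exact ⟨hle,
    HasThreshold.le_of_forall_le (hthr l hl (by omega)) (hthr (l + 1) (by omega) hln) hle⟩

/-- Proposition 3.2 of the paper: if `h⁽¹⁾, …, h⁽ⁿ⁾` are nondecreasing with thresholds
`x_l* ∈ ℝ ∪ {-∞}` (i.e. `h⁽ˡ⁾ x > 0 ↔ x > x_l*`), are integrable against the shifted law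
of `Y`, and satisfy the recursion
`h⁽ˡ⁺¹⁾ x = h⁽¹⁾ x + ρ · E[h⁽ˡ⁾(x + Y) · 1{x + Y > x_l*}]`,
then `h⁽ˡ⁺¹⁾ ≥ h⁽ˡ⁾` pointwise and `x_{l+1}* ≤ x_l*` for `1 ≤ l ≤ n - 1`. -/
theorem thresholds_monotone {Ω : Type*} [MeasurableSpace Ω]
    (P : Measure Ω) [IsProbabilityMeasure P]
    (Y : Ω → ℝ) (hY : Measurable Y) (ρ : ℝ) (hρ : 0 < ρ)
    (n : ℕ) (hn : 2 ≤ n)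
    (h : ℕ → ℝ → ℝ) (xs : ℕ → EReal)
    (hmono : ∀ l, 1 ≤ l → l ≤ n → Monotone (h l))
    (hthr : ∀ l, 1 ≤ l → l ≤ n → ∀ x : ℝ, 0 < h l x ↔ xs l < (x : EReal))
    (hxs : ∀ l, 1 ≤ l → l ≤ n → xs l ≠ ⊤)
    (hint : ∀ l, 1 ≤ l → l ≤ n → ∀ x : ℝ, Integrable (fun ω => h l (x + Y ω)) P)
    (hrec : ∀ l, 1 ≤ l → l + 1 ≤ n → ∀ x : ℝ,
      h (l + 1) x = h 1 x
        + ρ * ∫ ω, Set.indicator {y : ℝ | xs l < (y : EReal)} (h l) (x + Y ω) ∂P) :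
    ∀ l, 1 ≤ l → l + 1 ≤ n → (∀ x : ℝ, h l x ≤ h (l + 1) x) ∧ xs (l + 1) ≤ xs l :=
  thresholds_monotone_general P Y ρ hρ n h xs hthr hint hrec
end
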